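/- For two tetrahedra in R³, the set of candidate separating directions given by the 4 face normals of each tetrahedron and the 36 pairwise cross products of edge directions (6 edges each) suffices for the separating axis theorem: if the tetrahedra are disjoint, then at least one of these 44 directions is a separating axis. -/

import Mathlib

open scoped RealInnerProductSpace

local notation "E" => EuclideanSpace ℝ (Fin 3)

/-- Cross product on `ℝ³`. -/
noncomputable def cross (a b : E) : E :=
  WithLp.toLp 2 ![a 1 * b 2 - a 2 * b 1, a 2 * b 0 - a 0 * b 2, a 0 * b 1 - a 1 * b 0]

/-- The projection interval of a set onto a direction `n`. -/
noncomputable def projInterval (n : E) (S : Set E) : Set ℝ :=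
  Set.Icc (sInf ((fun x => ⟪x, n⟫) '' S)) (sSup ((fun x => ⟪x, n⟫) '' S))

open Module

section Aux

lemma ext3 {x y : E} (h0 : x 0 = y 0) (h1 : x 1 = y 1) (h2 : x 2 = y 2) : x = y := by
  ext i; fin_cases i
  · exact h0
  · exact h1
  · exact h2

lemma cr0 (a b : E) : cross a b 0 = a 1 * b 2 - a 2 * b 1 := rfl
lemma cr1 (a b : E) : cross a b 1 = a 2 * b 0 - a 0 * b 2 := rfl
lemma cr2 (a b : E) : cross a b 2 = a 0 * b 1 - a 1 * b 0 := rfl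

lemma inner_expand (x y : E) : ⟪x, y⟫ = x 0 * y 0 + x 1 * y 1 + x 2 * y 2 := by
  simp [PiLp.inner_apply, RCLike.inner_apply, Fin.sum_univ_three]
  ring

lemma cross_cross' (a b c : E) : cross a (cross b c) = ⟪a,c⟫ • b - ⟪a,b⟫ • c := by
  refine ext3 ?_ ?_ ?_ <;>
    simp only [cr0, cr1, cr2, inner_expand, PiLp.sub_apply, PiLp.smul_apply, smul_eq_mul] <;>
    ring

lemma cross_swap (a b : E) : cross a b = cross (-b) a := by
  refine ext3 ?_ ?_ ?_ <;> simp only [cr0, cr1, cr2, PiLp.neg_apply] <;> ring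

lemma cross_eq_zero_imp (a b : E) (h : cross a b = 0) : ⟪a,a⟫ • b = ⟪a,b⟫ • a := by
  have h0 : cross a b 0 = (0 : E) 0 := by rw [h]
  have h1 : cross a b 1 = (0 : E) 1 := by rw [h]
  have h2 : cross a b 2 = (0 : E) 2 := by rw [h]
  rw [cr0] at h0; rw [cr1] at h1; rw [cr2] at h2
  simp only [PiLp.zero_apply] at h0 h1 h2
  refine ext3 ?_ ?_ ?_ <;>
    simp only [inner_expand, PiLp.smul_apply, smul_eq_mul]
  · linear_combination (-(a 1))*h2 + (a 2)*h1
  · linear_combination (a 0)*h2 - (a 2)*h0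
  · linear_combination (-(a 0))*h1 + (a 1)*h0

lemma cross_parallel {a b : E} (ha : a ≠ 0) (h : cross a b = 0) : ∃ c : ℝ, b = c • a := by
  have key := cross_eq_zero_imp a b h
  have haa : ⟪a,a⟫ ≠ 0 := fun hh => ha ((inner_self_eq_zero (𝕜 := ℝ) (x := a)).mp hh)
  refine ⟨⟪a,b⟫ / ⟪a,a⟫, ?_⟩
  have : (⟪a,a⟫)⁻¹ • (⟪a,a⟫ • b) = (⟪a,a⟫)⁻¹ • (⟪a,b⟫ • a) := by rw [key]
  rw [smul_smul, smul_smul, inv_mul_cancel₀ haa, one_smul] at this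
  rw [div_eq_inv_mul]; exact this

lemma vertex_step (v : Fin 4 × Fin 4 → E)
    (hspan : Submodule.span ℝ (Set.range v) = ⊤)
    (n : E) (hn : ∀ a, 1 ≤ ⟪v a, n⟫)
    (hne : Submodule.span ℝ (v '' {a | ⟪v a, n⟫ = 1}) ≠ ⊤) :
    ∃ n' : E, (∀ a, 1 ≤ ⟪v a, n'⟫) ∧
      Submodule.span ℝ (v '' {a | ⟪v a, n⟫ = 1}) <
        Submodule.span ℝ (v '' {a | ⟪v a, n'⟫ = 1}) := by
  set W := Submodule.span ℝ (v '' {a | ⟪v a, n⟫ = 1}) with hWdef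
  have hexd : ∃ d ∈ Wᗮ, ∃ a, ⟪v a, d⟫ ≠ 0 := by
    by_contra hcon
    push_neg at hcon
    have hsub : ∀ a, v a ∈ W := by
      intro a
      have : v a ∈ Wᗮᗮ := by
        rw [Submodule.mem_orthogonal]
        intro u hu
        rw [real_inner_comm]
        exact hcon u hu a
      rwa [Submodule.orthogonal_orthogonal] at this
    apply hne
    rw [← top_le_iff, ← hspan]
    exact Submodule.span_le.2 (by rintro x ⟨a, rfl⟩; exact hsub a)
  obtain ⟨d₀, hd₀W, a₁, ha₁⟩ := hexd
  obtain ⟨d, hdW, a₂, ha₂⟩ : ∃ d ∈ Wᗮ, ∃ a, ⟪v a, d⟫ < 0 := by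
    rcases ha₁.lt_or_gt with h | h
    · exact ⟨d₀, hd₀W, a₁, h⟩
    · exact ⟨-d₀, Wᗮ.neg_mem hd₀W, a₁, by rw [inner_neg_right]; linarith⟩
  have hWd : ∀ w ∈ W, ⟪w, d⟫ = 0 := fun w hw => (Submodule.mem_orthogonal W d).mp hdW w hw
  have htd : ∀ a, ⟪v a, n⟫ = 1 → ⟪v a, d⟫ = 0 := fun a ha =>
    hWd _ (Submodule.subset_span ⟨a, ha, rfl⟩)
  have hstrict : ∀ a, ⟪v a, d⟫ ≠ 0 → 1 < ⟪v a, n⟫ := by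
    intro a ha
    rcases (hn a).lt_or_eq with h | h
    · exact h
    · exact absurd (htd a h.symm) ha
  set S := Finset.univ.filter (fun a => ⟪v a, d⟫ < 0) with hSdef
  have hSne : S.Nonempty :=
    ⟨a₂, by simp only [hSdef, Finset.mem_filter, Finset.mem_univ, true_and]; exact ha₂⟩
  obtain ⟨b, hbS, hbmin⟩ := Finset.exists_min_image S (fun a => (⟪v a, n⟫ - 1) / (-⟪v a, d⟫)) hSne
  have hbd : ⟪v b, d⟫ < 0 := by
    simpa only [hSdef, Finset.mem_filter, Finset.mem_univ, true_and] using hbS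
  set t := (⟪v b, n⟫ - 1) / (-⟪v b, d⟫) with htdef
  have ht : 0 < t := div_pos (by linarith [hstrict b (ne_of_lt hbd)]) (by linarith)
  refine ⟨n + t • d, ?_, ?_⟩
  · intro a
    have hinner : ⟪v a, n + t • d⟫ = ⟪v a, n⟫ + t * ⟪v a, d⟫ := by
      rw [inner_add_right, real_inner_smul_right]
    rcases le_or_gt 0 ⟪v a, d⟫ with h | h
    · nlinarith [hn a]
    · have haS : a ∈ S := by
        simp only [hSdef, Finset.mem_filter, Finset.mem_univ, true_and]; exact h
      have hmin := hbmin a haS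
      rw [div_le_div_iff₀ (by linarith) (by linarith)] at hmin
      have h2 : t * (-⟪v a, d⟫) ≤ ⟪v a, n⟫ - 1 := by
        rw [htdef, div_mul_eq_mul_div, div_le_iff₀ (by linarith)]
        linarith
      rw [hinner]; linarith
  · have hsub : {a | ⟪v a, n⟫ = 1} ⊆ {a | ⟪v a, n + t • d⟫ = 1} := by
      intro a ha
      have : ⟪v a, d⟫ = 0 := htd a ha
      simp only [Set.mem_setOf_eq] at ha ⊢
      rw [inner_add_right, real_inner_smul_right, this, ha]; ring
    have hle : W ≤ Submodule.span ℝ (v '' {a | ⟪v a, n + t • d⟫ = 1}) :=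
      Submodule.span_mono (Set.image_mono hsub)
    have hbtight : ⟪v b, n + t • d⟫ = 1 := by
      have hy : ⟪v b, d⟫ ≠ 0 := ne_of_lt hbd
      rw [inner_add_right, real_inner_smul_right, htdef, div_neg, neg_mul,
        div_mul_cancel₀ _ hy]
      ring
    have hbmem : v b ∈ Submodule.span ℝ (v '' {a | ⟪v a, n + t • d⟫ = 1}) :=
      Submodule.subset_span ⟨b, hbtight, rfl⟩
    have hbnot : v b ∉ W := fun hmem => absurd (hWd _ hmem) (ne_of_lt hbd)
    exact lt_of_le_of_ne hle (fun h => hbnot (h ▸ hbmem))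

lemma vertex_exists (v : Fin 4 × Fin 4 → E)
    (hspan : Submodule.span ℝ (Set.range v) = ⊤)
    (n₀ : E) (h₀ : ∀ a, 1 ≤ ⟪v a, n₀⟫) :
    ∃ n : E, (∀ a, 1 ≤ ⟪v a, n⟫) ∧
      Submodule.span ℝ (v '' {a | ⟪v a, n⟫ = 1}) = ⊤ := by
  have key : ∀ k : ℕ, ∀ n : E, (∀ a, 1 ≤ ⟪v a, n⟫) →
      3 ≤ k + finrank ℝ (Submodule.span ℝ (v '' {a | ⟪v a, n⟫ = 1})) →
      ∃ m : E, (∀ a, 1 ≤ ⟪v a, m⟫) ∧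
        Submodule.span ℝ (v '' {a | ⟪v a, m⟫ = 1}) = ⊤ := by
    intro k
    induction k with
    | zero =>
      intro n hn hrank
      refine ⟨n, hn, Submodule.eq_top_of_finrank_eq ?_⟩
      have h1 : finrank ℝ E = 3 := by simp [finrank_euclideanSpace]
      have h2 := Submodule.finrank_le (Submodule.span ℝ (v '' {a | ⟪v a, n⟫ = 1}))
      omega
    | succ k ih =>
      intro n hn hrank
      by_cases htop : Submodule.span ℝ (v '' {a | ⟪v a, n⟫ = 1}) = ⊤
      · exact ⟨n, hn, htop⟩
      · obtain ⟨n', hn', hlt⟩ := vertex_step v hspan n hn htop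
        apply ih n' hn'
        have := Submodule.finrank_lt_finrank_of_lt hlt
        omega
  apply key 3 n₀ h₀
  omega

lemma proj_disjoint (u : E) (P Q : Fin 4 → E)
    (h : ∀ i j, ⟪P i, u⟫ < ⟪Q j, u⟫) :
    Disjoint (projInterval u (convexHull ℝ (Set.range P)))
      (projInterval u (convexHull ℝ (Set.range Q))) := by
  obtain ⟨imax, _, hi⟩ := Finset.exists_max_image Finset.univ (fun i => ⟪P i, u⟫)
    ⟨0, Finset.mem_univ 0⟩
  obtain ⟨jmin, _, hj⟩ := Finset.exists_min_image Finset.univ (fun j => ⟪Q j, u⟫)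
    ⟨0, Finset.mem_univ 0⟩
  have hlin : IsLinearMap ℝ (fun x : E => ⟪x, u⟫) :=
    ⟨fun x y => inner_add_left x y u, fun c x => real_inner_smul_left x u c⟩
  have hPb : ∀ x ∈ convexHull ℝ (Set.range P), ⟪x, u⟫ ≤ ⟪P imax, u⟫ := by
    intro x hx
    have hsub : convexHull ℝ (Set.range P) ⊆ {x : E | ⟪x, u⟫ ≤ ⟪P imax, u⟫} :=
      convexHull_min (by rintro _ ⟨i, rfl⟩; exact hi i (Finset.mem_univ i))
        (convex_halfSpace_le hlin _)
    exact hsub hx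
  have hQb : ∀ y ∈ convexHull ℝ (Set.range Q), ⟪Q jmin, u⟫ ≤ ⟪y, u⟫ := by
    intro y hy
    have hsub : convexHull ℝ (Set.range Q) ⊆ {x : E | ⟪Q jmin, u⟫ ≤ ⟪x, u⟫} :=
      convexHull_min (by rintro _ ⟨j, rfl⟩; exact hj j (Finset.mem_univ j))
        (convex_halfSpace_ge hlin _)
    exact hsub hy
  have hPmem : P 0 ∈ convexHull ℝ (Set.range P) :=
    subset_convexHull ℝ _ (Set.mem_range_self 0)
  have hQmem : Q 0 ∈ convexHull ℝ (Set.range Q) :=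
    subset_convexHull ℝ _ (Set.mem_range_self 0)
  have hsup : sSup ((fun x => ⟪x, u⟫) '' convexHull ℝ (Set.range P)) ≤ ⟪P imax, u⟫ :=
    csSup_le ⟨⟪P 0, u⟫, ⟨P 0, hPmem, rfl⟩⟩ (by rintro _ ⟨x, hx, rfl⟩; exact hPb x hx)
  have hinf : ⟪Q jmin, u⟫ ≤ sInf ((fun x => ⟪x, u⟫) '' convexHull ℝ (Set.range Q)) :=
    le_csInf ⟨⟪Q 0, u⟫, ⟨Q 0, hQmem, rfl⟩⟩ (by rintro _ ⟨x, hx, rfl⟩; exact hQb x hx)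
  rw [Set.disjoint_left]
  intro x hx1 hx2
  have h1 : x ≤ sSup ((fun x => ⟪x, u⟫) '' convexHull ℝ (Set.range P)) := hx1.2
  have h2 : sInf ((fun x => ⟪x, u⟫) '' convexHull ℝ (Set.range Q)) ≤ x := hx2.1
  have := h imax jmin
  linarith

end Aux

/-- SAT for tetrahedra: if two tetrahedra (convex hulls of four
affinely independent points) are disjoint, then one of the candidate directions —
face normals of either tetrahedron (cross products of two edges of a face) or
cross products of an edge of each — is a separating axis. -/
theorem stmt_17 (p q : Fin 4 → E)
    (hp : AffineIndependent ℝ p) (hq : AffineIndependent ℝ q)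
    (hdisj : Disjoint (convexHull ℝ (Set.range p)) (convexHull ℝ (Set.range q))) :
    ∃ n : E,
      ((∃ i j k : Fin 4, n = cross (p j - p i) (p k - p i)) ∨
       (∃ i j k : Fin 4, n = cross (q j - q i) (q k - q i)) ∨
       (∃ i j : Fin 4, ∃ k l : Fin 4, n = cross (p j - p i) (q l - q k))) ∧
      n ≠ 0 ∧
      Disjoint (projInterval n (convexHull ℝ (Set.range p)))
        (projInterval n (convexHull ℝ (Set.range q))) := by
  classical
  set v : Fin 4 × Fin 4 → E := fun a => q a.2 - p a.1 with hvdef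
  have hv : ∀ i j : Fin 4, v (i, j) = q j - p i := fun i j => rfl
  -- Step A: initial strictly separating direction
  obtain ⟨f, u, w, hfu, huw, hwf⟩ :=
    geometric_hahn_banach_compact_closed (convex_convexHull ℝ _)
      ((Set.finite_range p).isCompact_convexHull (𝕜 := ℝ)) (convex_convexHull ℝ _)
      ((Set.finite_range q).isCompact_convexHull (𝕜 := ℝ)).isClosed hdisj
  set nd := (InnerProductSpace.toDual ℝ E).symm f with hnddef
  have hnd : ∀ x : E, ⟪nd, x⟫ = f x := fun x => InnerProductSpace.toDual_symm_apply
  have hwu : 0 < w - u := by linarith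
  have hsep : ∀ a : Fin 4 × Fin 4, w - u ≤ ⟪v a, nd⟫ := by
    rintro ⟨i, j⟩
    have h1 : f (p i) < u := hfu (p i) (subset_convexHull ℝ _ (Set.mem_range_self i))
    have h2 : w < f (q j) := hwf (q j) (subset_convexHull ℝ _ (Set.mem_range_self j))
    have : ⟪v (i, j), nd⟫ = f (q j) - f (p i) := by
      rw [hv, real_inner_comm, inner_sub_right, hnd, hnd]
    rw [this]; linarith
  set n₀ : E := (w - u)⁻¹ • nd with hn₀def
  have h₀ : ∀ a, 1 ≤ ⟪v a, n₀⟫ := by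
    intro a
    rw [hn₀def, real_inner_smul_right]
    have := mul_le_mul_of_nonneg_left (hsep a) (inv_nonneg.2 (le_of_lt hwu))
    rwa [inv_mul_cancel₀ (ne_of_gt hwu)] at this
  -- the constraint vectors span everything
  have hspan : Submodule.span ℝ (Set.range v) = ⊤ := by
    have li := (affineIndependent_iff_linearIndependent_vsub ℝ q 0).mp hq
    have hcard : Fintype.card {i : Fin 4 // i ≠ 0} = 3 := by decide
    have hr : finrank ℝ (Submodule.span ℝ
        (Set.range fun i : {i : Fin 4 // i ≠ 0} => q ↑i -ᵥ q 0)) = 3 :=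
      (finrank_span_eq_card li).trans hcard
    have htopfam : Submodule.span ℝ
        (Set.range fun i : {i : Fin 4 // i ≠ 0} => q ↑i -ᵥ q 0) = ⊤ :=
      Submodule.eq_top_of_finrank_eq (by rw [hr]; simp [finrank_euclideanSpace])
    rw [← top_le_iff, ← htopfam]
    apply Submodule.span_le.2
    rintro x ⟨i, rfl⟩
    have heq : q ↑i -ᵥ q 0 = v (0, ↑i) - v (0, 0) := by
      rw [hv, hv, vsub_eq_sub]; abel
    show q ↑i -ᵥ q 0 ∈ _
    rw [heq]
    exact sub_mem (Submodule.subset_span (Set.mem_range_self _))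
      (Submodule.subset_span (Set.mem_range_self _))
  -- Step B: get a "vertex" direction
  obtain ⟨n, hn, htop⟩ := vertex_exists v hspan n₀ h₀
  have hn0 : n ≠ 0 := by
    intro h
    have := hn (0, 0)
    rw [h, inner_zero_right] at this
    linarith
  -- Step C: extract candidate direction
  have hTne : {a : Fin 4 × Fin 4 | ⟪v a, n⟫ = 1}.Nonempty := by
    by_contra h
    rw [Set.not_nonempty_iff_eq_empty] at h
    rw [h, Set.image_empty, Submodule.span_empty] at htop
    exact bot_ne_top htop
  obtain ⟨⟨i0, j0⟩, ha0⟩ := hTne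
  have ha0' : ⟪v (i0, j0), n⟫ = 1 := ha0
  have hprod : ∀ i j : Fin 4, ⟪v (i, j), n⟫ = 1 →
      ⟪v (i0, j), n⟫ = 1 ∧ ⟪v (i, j0), n⟫ = 1 := by
    intro i j h1
    have e : ⟪v (i0, j), n⟫ + ⟪v (i, j0), n⟫ = ⟪v (i, j), n⟫ + ⟪v (i0, j0), n⟫ := by
      rw [← inner_add_left, ← inner_add_left]
      congr 1
      simp only [hv]; abel
    have g1 := hn (i0, j)
    have g2 := hn (i, j0)
    constructor <;> linarith
  set G : Set E := {x : E | (∃ j, ⟪v (i0, j), n⟫ = 1 ∧ x = q j - q j0) ∨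
    (∃ i, ⟪v (i, j0), n⟫ = 1 ∧ x = p i - p i0)} with hGdef
  have hGperp : ∀ g ∈ G, ⟪g, n⟫ = 0 := by
    rintro g (⟨j, hj, rfl⟩ | ⟨i, hi, rfl⟩)
    · have heq : q j - q j0 = v (i0, j) - v (i0, j0) := by rw [hv, hv]; abel
      rw [heq, inner_sub_left, hj, ha0']; ring
    · have heq : p i - p i0 = v (i0, j0) - v (i, j0) := by rw [hv, hv]; abel
      rw [heq, inner_sub_left, hi, ha0']; ring
  have hspanG : (⊤ : Submodule ℝ E) ≤ Submodule.span ℝ (insert (v (i0, j0)) G) := by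
    rw [← htop]
    apply Submodule.span_le.2
    rintro x ⟨⟨i, j⟩, haT, rfl⟩
    obtain ⟨h1, h2⟩ := hprod i j haT
    have heq : v (i, j) = (q j - q j0) - (p i - p i0) + v (i0, j0) := by
      simp only [hv]; abel
    rw [heq]
    exact add_mem
      (sub_mem
        (Submodule.subset_span (Set.mem_insert_of_mem _ (Or.inl ⟨j, h1, rfl⟩)))
        (Submodule.subset_span (Set.mem_insert_of_mem _ (Or.inr ⟨i, h2, rfl⟩))))
      (Submodule.subset_span (Set.mem_insert _ _))
  have hpair : ∃ g1 ∈ G, ∃ g2 ∈ G, cross g1 g2 ≠ 0 := by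
    by_contra hcon
    push_neg at hcon
    have hg0 : ∃ g0 : E, ∀ g ∈ G, g ∈ Submodule.span ℝ ({g0} : Set E) := by
      by_cases hz : ∃ g0 ∈ G, g0 ≠ 0
      · obtain ⟨g0, hg0G, hg0ne⟩ := hz
        refine ⟨g0, fun g hg => ?_⟩
        obtain ⟨c, rfl⟩ := cross_parallel hg0ne (hcon g0 hg0G g hg)
        exact Submodule.mem_span_singleton.2 ⟨c, rfl⟩
      · push_neg at hz
        exact ⟨0, fun g hg => by rw [hz g hg]; exact Submodule.zero_mem _⟩
    obtain ⟨g0, hg0⟩ := hg0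
    have hle : (⊤ : Submodule ℝ E) ≤
        Submodule.span ℝ ({v (i0, j0)} : Set E) ⊔ Submodule.span ℝ ({g0} : Set E) := by
      refine le_trans hspanG (Submodule.span_le.2 ?_)
      rintro x hx
      rcases hx with rfl | hxG
      · exact Submodule.mem_sup_left (Submodule.subset_span rfl)
      · exact Submodule.mem_sup_right (hg0 x hxG)
    have hd1 : finrank ℝ (Submodule.span ℝ ({v (i0, j0)} : Set E)) ≤ 1 := by
      by_cases h : v (i0, j0) = 0
      · rw [h, Submodule.span_zero_singleton]; simp
      · rw [finrank_span_singleton h]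
    have hd2 : finrank ℝ (Submodule.span ℝ ({g0} : Set E)) ≤ 1 := by
      by_cases h : g0 = 0
      · rw [h, Submodule.span_zero_singleton]; simp
      · rw [finrank_span_singleton h]
    have hsum := Submodule.finrank_sup_add_finrank_inf_eq
      (Submodule.span ℝ ({v (i0, j0)} : Set E)) (Submodule.span ℝ ({g0} : Set E))
    have hmono := Submodule.finrank_mono hle
    have htopr : finrank ℝ (⊤ : Submodule ℝ E) = 3 := by
      rw [finrank_top]; simp [finrank_euclideanSpace]
    omega
  obtain ⟨g1, hg1G, g2, hg2G, hcr⟩ := hpair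
  have hg1n : ⟪g1, n⟫ = 0 := hGperp _ hg1G
  have hg2n : ⟪g2, n⟫ = 0 := hGperp _ hg2G
  have hnm : cross n (cross g1 g2) = 0 := by
    have h1 : ⟪n, g1⟫ = 0 := by rw [real_inner_comm]; exact hg1n
    have h2 : ⟪n, g2⟫ = 0 := by rw [real_inner_comm]; exact hg2n
    rw [cross_cross', h1, h2, zero_smul, zero_smul, sub_self]
  obtain ⟨c, hc⟩ := cross_parallel hn0 hnm
  have hc0 : c ≠ 0 := by
    intro h
    rw [h, zero_smul] at hc
    exact hcr hc
  refine ⟨cross g1 g2, ?_, hcr, ?_⟩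
  -- candidate form
  · rcases hg1G with ⟨j1, hj1, rfl⟩ | ⟨i1, hi1, rfl⟩ <;>
      rcases hg2G with ⟨j2, hj2, rfl⟩ | ⟨i2, hi2, rfl⟩
    · exact Or.inr (Or.inl ⟨j0, j1, j2, rfl⟩)
    · refine Or.inr (Or.inr ⟨i2, i0, j0, j1, ?_⟩)
      rw [cross_swap, ← neg_sub (p i2) (p i0)]
    · exact Or.inr (Or.inr ⟨i0, i1, j0, j2, rfl⟩)
    · exact Or.inl ⟨i0, i1, i2, rfl⟩
  -- separation
  · have hbase : ∀ i j : Fin 4, 1 ≤ ⟪q j, n⟫ - ⟪p i, n⟫ := by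
      intro i j
      have := hn (i, j)
      rwa [hv, inner_sub_left] at this
    rcases hc0.lt_or_gt with hneg | hpos
    · refine (proj_disjoint (cross g1 g2) q p ?_).symm
      intro j i
      rw [hc, real_inner_smul_right, real_inner_smul_right]
      have := hbase i j
      nlinarith
    · refine proj_disjoint (cross g1 g2) p q ?_
      intro i j
      rw [hc, real_inner_smul_right, real_inner_smul_right]
      have := hbase i j
      nlinarith
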